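/- If (L,·) is a σ-generalized right Bol loop, then (xy·σ(x))^{-1} = σ(x)^{-1}y^{-1}·x^{-1} for all x,y ∈ L. -/

import Mathlib

/-!
Write `x⁻¹` for `rho x`. Putting `z = y⁻¹` in the Bol identity and cancelling `σ y` on the right
gives the right inverse property `(w * y) * y⁻¹ = w`. In a loop with this property right inverses
are two-sided and `(x⁻¹)⁻¹ = x`. The Bol identity at `(A, x, y)` with `A = σ(x)⁻¹ y⁻¹ · x⁻¹` then
has left side `σ(x)⁻¹ * σ(x) = 1`, so `A` is the inverse of `xy · σ(x)`.
-/

/-- A loop: a quasigroup with two-sided identity. -/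
class MyLoop (L : Type*) extends Mul L, One L where
  one_mul : ∀ a : L, 1 * a = a
  mul_one : ∀ a : L, a * 1 = a
  ldiv : L → L → L
  rdiv : L → L → L
  mul_ldiv : ∀ a b : L, a * ldiv a b = b
  ldiv_mul : ∀ a b : L, ldiv a (a * b) = b
  rdiv_mul : ∀ a b : L, rdiv a b * b = a
  mul_rdiv : ∀ a b : L, rdiv (a * b) b = a

namespace MyLoop

variable {L : Type*} [MyLoop L]

/-- right inverse: `x * rho x = 1` -/
def rho (x : L) : L := ldiv x 1

/-- left inverse: `lam x * x = 1` -/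
def lam (x : L) : L := rdiv 1 x

/-- right translation `R_a : y ↦ y * a`, as a bijection -/
def Rt (a : L) : Equiv.Perm L :=
  ⟨fun y => y * a, fun y => rdiv y a, fun y => mul_rdiv y a, fun y => rdiv_mul y a⟩

/-- left translation `L_a : y ↦ a * y`, as a bijection -/
def Lt (a : L) : Equiv.Perm L :=
  ⟨fun y => a * y, fun y => ldiv a y, fun y => ldiv_mul a y, fun y => mul_ldiv a y⟩

/-- σ-generalized (right) Bol loop identity -/
def GBol (σ : L → L) : Prop := ∀ x y z : L, ((x * y) * z) * σ y = x * ((y * z) * σ y)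

/-- σ-generalized left Bol loop identity -/
def LBol (σ : L → L) : Prop := ∀ x y z : L, σ y * (z * (y * x)) = (σ y * (z * y)) * x

/-- σ-M-loop identity -/
def MLoopP (σ : L → L) : Prop := ∀ x y z : L, (x * y) * (z * σ x) = (x * (y * z)) * σ x

/-- right inverse property -/
def RIP (L : Type*) [MyLoop L] : Prop := ∀ x y : L, (y * x) * rho x = y

/-- left inverse property -/
def LIP (L : Type*) [MyLoop L] : Prop := ∀ x y : L, lam x * (x * y) = y

/-- right nucleus -/
def Nrho (L : Type*) [MyLoop L] : Set L := {a | ∀ y z : L, (z * y) * a = z * (y * a)}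

/-- middle nucleus -/
def Nmu (L : Type*) [MyLoop L] : Set L := {a | ∀ y z : L, (z * a) * y = z * (a * y)}

/-- multiplication of the A-holomorph `H = A × L`, `(α,x)∘(β,y) = (αβ, xβ · y)` -/
def hmul (A : Subgroup (MulAut L)) (p q : ↥A × L) : ↥A × L :=
  (p.1 * q.1, (q.1 : MulAut L) p.2 * q.2)

/-- the right inverse of an element of the holomorph -/
def hrho (A : Subgroup (MulAut L)) (p : ↥A × L) : ↥A × L :=
  (p.1⁻¹, rho ((p.1⁻¹ : MulAut L) p.2))

/-- the holomorph is a σ'-generalized Bol loop, where `σ'(α,x) = (α, σ x)` -/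
def HGBol (A : Subgroup (MulAut L)) (σ : L → L) : Prop :=
  ∀ p q r : ↥A × L,
    hmul A (hmul A (hmul A p q) r) (q.1, σ q.2) =
      hmul A p (hmul A (hmul A q r) (q.1, σ q.2))

end MyLoop

open MyLoop

namespace MyLoop

variable {L : Type*} [MyLoop L]

theorem mul_right_cancel {a b c : L} (h : a * c = b * c) : a = b := by
  rw [← mul_rdiv a c, h, mul_rdiv]

theorem mul_rho_cancel (x : L) : x * rho x = 1 :=
  mul_ldiv x 1

theorem rho_eq_of_mul_eq_one {a b : L} (h : a * b = 1) : rho a = b := by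
  rw [rho, ← h, ldiv_mul]

namespace RIP

theorem rho_mul_cancel (hR : RIP L) (x : L) : rho x * x = 1 := by
  have h : (lam x * x) * rho x = lam x := hR x (lam x)
  rw [lam, rdiv_mul, MyLoop.one_mul] at h
  rw [h, rdiv_mul]

theorem rho_rho (hR : RIP L) (x : L) : rho (rho x) = x :=
  rho_eq_of_mul_eq_one (hR.rho_mul_cancel x)

theorem rho_mul_cancel_right (hR : RIP L) (x w : L) : (w * rho x) * x = w := by
  simpa only [hR.rho_rho] using hR (rho x) w

end RIP

theorem GBol.rip {σ : L → L} (h : GBol σ) : RIP L := fun y w =>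
  mul_right_cancel (by rw [h w y (rho y), mul_rho_cancel, MyLoop.one_mul])

end MyLoop

/-- in a σ-generalized right Bol loop,
`(xy·σ(x))⁻¹ = σ(x)⁻¹ y⁻¹ · x⁻¹` (inverses are two-sided there, given by `rho`). -/
theorem gbol_inv_identity {L : Type*} [MyLoop L] (σ : L → L) (h : GBol σ) :
    ∀ x y : L, rho ((x * y) * σ x) = (rho (σ x) * rho y) * rho x := by
  intro x y
  have hR : RIP L := h.rip
  have hA : ((rho (σ x) * rho y) * rho x) * ((x * y) * σ x) = 1 := by
    rw [← h, hR.rho_mul_cancel_right, hR.rho_mul_cancel_right, hR.rho_mul_cancel]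
  rw [← rho_eq_of_mul_eq_one hA, hR.rho_rho]
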